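/- (Injectivity of the LE sum-pooling.) Let N ≥ 2, D ≥ 1, and K₁ = N(N−1)(D−1)/2 + 1. Let w_1,…,w_{K₁} ∈ ℝ^D be such that every subset of D of them is linearly independent. For i ∈ {1,…,D}, j ∈ {1,…,K₁}, p ∈ {1,…,N} and q ∈ {1,…,p+1}, define v_{i,j,p,q} = (q−1)·e_i + (p−q+1)·w_j ∈ ℝ^D, where e_i is the i-th canonical basis vector. If X, X' ∈ ℝ^{N×D} satisfy Σ_{n=1}^N exp(⟨v_{i,j,p,q}, x^{(n)}⟩) = Σ_{n=1}^N exp(⟨v_{i,j,p,q}, x'^{(n)}⟩) for all such (i, j, p, q), then there exists a permutation σ of {1,…,N} with x'^{(σ(n))} = x^{(n)} for all n (i.e., X ~ X'). -/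

import Mathlib

/-!
With `v = r • e_i + s • w_j` (that is `p = r + s`, `q = r + 1`), the exponential sums are
the mixed power sums `∑ₙ aₙ ^ r * bₙ ^ s` of degree `r + s ≤ N` in `aₙ = exp x⁽ⁿ⁾ᵢ` and
`bₙ = exp ⟨w_j, x⁽ⁿ⁾⟩`. Along a generic line `a + t b` these become ordinary power sums,
which determine a multiset of `N` numbers by Newton's identities; hence, for every `i` and
`j`, the multisets of pairs `(x⁽ⁿ⁾ᵢ, ⟨w_j, x⁽ⁿ⁾⟩)` agree for `X` and `X'`. A nonzero
difference of two rows is orthogonal to at most `D - 1` of the `w_j`, since any `D` of them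
span `ℝ^D`; with at most `N(N-1)/2` such differences, some `w_j` separates the rows of `X`,
and matching rows by their value under `⟨w_j, ·⟩` matches them coordinatewise.
-/

open Finset Matrix

theorem exists_equiv_apply_eq_of_map_univ_val_eq {α β γ : Type*} [Fintype α] [Fintype β]
    {f : α → γ} {g : β → γ} (h : univ.val.map f = univ.val.map g) :
    ∃ e : α ≃ β, ∀ a, g (e a) = f a := by
  classical
  refine ⟨Equiv.ofFiberEquiv fun c => Fintype.equivOfCardEq ?_, Equiv.ofFiberEquiv_map _⟩
  have hc := congrArg (Multiset.count c) h
  rw [Multiset.count_map, Multiset.count_map] at hc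
  simpa [Fintype.card_subtype, eq_comm, Finset.card_def] using hc

section PowerSums

variable {R ι : Type*} [CommRing R] [IsDomain R] [CharZero R] [Fintype ι]

theorem esymm_map_univ_val_eq_of_sum_pow_eq {n : ℕ} {z z' : ι → R}
    (h : ∀ p, 1 ≤ p → p ≤ n → ∑ i, z i ^ p = ∑ i, z' i ^ p) :
    ∀ k ≤ n, (univ.val.map z).esymm k = (univ.val.map z').esymm k := by
  have newton (f : ι → R) (k : ℕ) : (k : R) * (univ.val.map f).esymm k = (-1) ^ (k + 1) *
      ∑ a ∈ antidiagonal k with a.1 < k,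
        (-1) ^ a.1 * (univ.val.map f).esymm a.1 * ∑ i, f i ^ a.2 := by
    have h := congrArg (MvPolynomial.aeval f) (MvPolynomial.mul_esymm_eq_sum ι R k)
    simp only [map_mul, map_pow, map_neg, map_one, map_natCast, map_sum, MvPolynomial.psum,
      MvPolynomial.aeval_X, MvPolynomial.aeval_esymm_eq_multiset_esymm] at h
    exact h
  intro k
  induction k using Nat.strong_induction_on with
  | _ k ih =>
    intro hk
    rcases k.eq_zero_or_pos with rfl | hk0
    · simp [Multiset.esymm]
    refine mul_left_cancel₀ (Nat.cast_ne_zero.2 hk0.ne') ?_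
    rw [newton, newton]
    congr 1
    refine sum_congr rfl fun a ha => ?_
    rw [mem_filter, HasAntidiagonal.mem_antidiagonal] at ha
    rw [ih a.1 ha.2 (by omega), h a.2 (by omega) (by omega)]

theorem map_univ_val_eq_of_sum_pow_eq {z z' : ι → R}
    (h : ∀ p, 1 ≤ p → p ≤ Fintype.card ι → ∑ i, z i ^ p = ∑ i, z' i ^ p) :
    univ.val.map z = univ.val.map z' := by
  have hprod : ((univ.val.map z).map fun r => Polynomial.X - Polynomial.C r).prod =
      ((univ.val.map z').map fun r => Polynomial.X - Polynomial.C r).prod := by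
    rw [Multiset.prod_X_sub_X_eq_sum_esymm, Multiset.prod_X_sub_X_eq_sum_esymm]
    simp only [Multiset.card_map, card_val, card_univ]
    refine sum_congr rfl fun k hk => ?_
    rw [esymm_map_univ_val_eq_of_sum_pow_eq h k (by simpa [Nat.lt_succ_iff] using hk)]
  simpa only [Polynomial.roots_multiset_prod_X_sub_C] using congrArg Polynomial.roots hprod

end PowerSums

theorem sum_add_mul_pow {R ι : Type*} [CommSemiring R] [Fintype ι] (u v : ι → R) (t : R)
    (p : ℕ) :
    ∑ i, (u i + t * v i) ^ p =
      ∑ m ∈ range (p + 1), t ^ (p - m) * p.choose m * ∑ i, u i ^ m * v i ^ (p - m) := by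
  simp_rw [add_pow, mul_sum]
  rw [sum_comm]
  refine sum_congr rfl fun m _ => sum_congr rfl fun i _ => by ring

theorem exists_injOn_fst_add_mul_snd {K : Type*} [Field K] [Infinite K] (S : Finset (K × K)) :
    ∃ t : K, Set.InjOn (fun q : K × K => q.1 + t * q.2) S := by
  classical
  obtain ⟨t, ht⟩ := Infinite.exists_notMem_finset
    ((S ×ˢ S).image fun q => (q.2.1 - q.1.1) / (q.1.2 - q.2.2))
  refine ⟨t, fun q hq q' hq' hqq' => ?_⟩
  by_cases h2 : q.2 = q'.2
  · exact Prod.ext (by simp_all) h2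
  · refine absurd (mem_image.2 ⟨(q, q'), mem_product.2 ⟨hq, hq'⟩, ?_⟩) ht
    have : q.2 - q'.2 ≠ 0 := sub_ne_zero.2 h2
    field_simp
    linear_combination -hqq'

theorem map_univ_val_prod_eq_of_sum_pow_mul_pow_eq {K ι : Type*} [Field K] [CharZero K]
    [Fintype ι] {z y z' y' : ι → K}
    (h : ∀ r s, 1 ≤ r + s → r + s ≤ Fintype.card ι →
      ∑ i, z i ^ r * y i ^ s = ∑ i, z' i ^ r * y' i ^ s) :
    univ.val.map (fun i => (z i, y i)) = univ.val.map (fun i => (z' i, y' i)) := by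
  classical
  obtain ⟨t, ht⟩ := exists_injOn_fst_add_mul_snd
    (univ.image (fun i => (z i, y i)) ∪ univ.image (fun i => (z' i, y' i)))
  have hpow : ∀ p, 1 ≤ p → p ≤ Fintype.card ι →
      ∑ i, (z i + t * y i) ^ p = ∑ i, (z' i + t * y' i) ^ p := by
    intro p hp hpn
    rw [sum_add_mul_pow, sum_add_mul_pow]
    refine sum_congr rfl fun m hm => ?_
    rw [h m (p - m) (by grind) (by grind)]
  obtain ⟨e, he⟩ :=
    exists_equiv_apply_eq_of_map_univ_val_eq (map_univ_val_eq_of_sum_pow_eq hpow)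
  have hpair (i : ι) : (z' (e i), y' (e i)) = (z i, y i) :=
    ht (mem_coe.2 (mem_union_right _ (mem_image_of_mem _ (mem_univ _))))
      (mem_coe.2 (mem_union_left _ (mem_image_of_mem _ (mem_univ _)))) (he i)
  calc univ.val.map (fun i => (z i, y i)) = univ.val.map (fun i => (z' (e i), y' (e i))) :=
        Multiset.map_congr rfl fun i _ => (hpair i).symm
    _ = univ.val.map (fun i => (z' i, y' i)) := by
        conv_rhs => rw [← Multiset.map_univ_val_equiv e, Multiset.map_map]
        rfl

theorem exists_equiv_of_injOn_of_map_univ_val_eq {α β ι κ γ : Type*} [Fintype α] [Fintype β]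
    [Nonempty ι] {X : α → ι → κ} {X' : β → ι → κ} {g : (ι → κ) → γ}
    (hg : Set.InjOn g (Set.range X))
    (h : ∀ i, (univ : Finset α).val.map (fun a => (X a i, g (X a))) =
      (univ : Finset β).val.map (fun b => (X' b i, g (X' b)))) :
    ∃ e : α ≃ β, ∀ a, X' (e a) = X a := by
  obtain ⟨e, he⟩ : ∃ e : α ≃ β, ∀ a, g (X' (e a)) = g (X a) := by
    refine exists_equiv_apply_eq_of_map_univ_val_eq (f := g ∘ X) (g := g ∘ X') ?_
    simpa [Multiset.map_map] using congrArg (Multiset.map Prod.snd) (h (Classical.arbitrary ι))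
  refine ⟨e, fun a => funext fun i => ?_⟩
  have hmem : (X' (e a) i, g (X' (e a))) ∈ univ.val.map (fun c => (X c i, g (X c))) :=
    h i ▸ Multiset.mem_map_of_mem _ (mem_univ _)
  obtain ⟨b, -, hb⟩ := Multiset.mem_map.1 hmem
  obtain ⟨hbi, hbg⟩ := Prod.mk.inj hb
  rw [← hbi, hg ⟨b, rfl⟩ ⟨a, rfl⟩ (hbg.trans (he a))]

theorem card_filter_apply_eq_zero_lt_finrank {K V ι : Type*} [Field K] [DecidableEq K]
    [AddCommGroup V] [Module K V] [FiniteDimensional K V] [Fintype ι] {w : ι → V}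
    (hw : ∀ s : Finset ι, #s = Module.finrank K V → LinearIndependent K (fun j : s => w j))
    {φ : Module.Dual K V} (hφ : φ ≠ 0) :
    #{j | φ (w j) = 0} < Module.finrank K V := by
  classical
  by_contra! hcard
  obtain ⟨s, hs, hscard⟩ := exists_subset_card_eq hcard
  have hspan := (hw s hscard).span_eq_top_of_card_eq_finrank' (by simpa using hscard)
  refine hφ (LinearMap.ker_eq_top.1 (top_le_iff.1 (hspan ▸ Submodule.span_le.2 ?_)))
  rintro _ ⟨j, rfl⟩
  exact (mem_filter.1 (hs j.2)).2

theorem exists_injOn_dotProduct {K ι κ : Type*} [Field K] [Fintype ι] [Fintype κ]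
    {w : ι → κ → K}
    (hw : ∀ s : Finset ι, #s = Fintype.card κ → LinearIndependent K (fun j : s => w j))
    (S : Finset (κ → K)) (hS : (#S).choose 2 * (Fintype.card κ - 1) < Fintype.card ι) :
    ∃ j, Set.InjOn (w j ⬝ᵥ ·) S := by
  classical
  let bad (s : Finset (κ → K)) : Finset ι := {j | ¬ Set.InjOn (w j ⬝ᵥ ·) s}
  have hbad : ∀ s ∈ S.powersetCard 2, #(bad s) ≤ Fintype.card κ - 1 := by
    intro s hs
    obtain ⟨x, y, hxy, rfl⟩ := card_eq_two.1 (mem_powersetCard.1 hs).2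
    have hφ : dotProductEquiv K κ (x - y) ≠ 0 := by simpa [sub_eq_zero] using hxy
    have hbad_eq : bad {x, y} = ({j | dotProductEquiv K κ (x - y) (w j) = 0} : Finset ι) := by
      ext j
      simp [bad, hxy, dotProduct_comm, sub_eq_zero]
    rw [hbad_eq]
    have := card_filter_apply_eq_zero_lt_finrank (w := w) (by simpa using hw) hφ
    rw [Module.finrank_fintype_fun_eq_card] at this
    omega
  have hcard : #((S.powersetCard 2).biUnion bad) < #(univ : Finset ι) :=
    calc #((S.powersetCard 2).biUnion bad)
        ≤ ∑ s ∈ S.powersetCard 2, #(bad s) := card_biUnion_le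
      _ ≤ (#S).choose 2 * (Fintype.card κ - 1) := by simpa using sum_le_sum hbad
      _ < #(univ : Finset ι) := by simpa using hS
  obtain ⟨j, -, hj⟩ := exists_mem_notMem_of_card_lt_card hcard
  refine ⟨j, fun x hx y hy hxy => ?_⟩
  by_contra hne
  refine hj (mem_biUnion.2 ⟨{x, y}, mem_powersetCard.2 ⟨?_, card_pair hne⟩, ?_⟩)
  · exact insert_subset_iff.2 ⟨hx, singleton_subset_iff.2 hy⟩
  · simp [bad, hxy, hne]

theorem Nat.choose_two_mul_le (n m : ℕ) : n.choose 2 * m ≤ n * (n - 1) * m / 2 := by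
  rw [Nat.choose_two_right, mul_comm, mul_comm (n * (n - 1))]
  exact Nat.mul_div_le_mul_div_assoc _ _ _

theorem exp_sum_single_add_mul {κ : Type*} [Fintype κ] [DecidableEq κ] (i : κ)
    (v x : κ → ℝ) (r s : ℕ) :
    Real.exp (∑ d, ((((r + 1 : ℕ) : ℝ) - 1) * (Pi.single i (1 : ℝ) : κ → ℝ) d
        + (((r + s : ℕ) : ℝ) - ((r + 1 : ℕ) : ℝ) + 1) * v d) * x d) =
      Real.exp (x i) ^ r * Real.exp (v ⬝ᵥ x) ^ s := by
  have hsum : ∑ d, ((((r + 1 : ℕ) : ℝ) - 1) * (Pi.single i (1 : ℝ) : κ → ℝ) d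
      + (((r + s : ℕ) : ℝ) - ((r + 1 : ℕ) : ℝ) + 1) * v d) * x d =
        r * x i + s * (v ⬝ᵥ x) := by
    push_cast
    simp [add_mul, sum_add_distrib, mul_assoc, ← mul_sum, Pi.single_apply, dotProduct]
  rw [hsum, Real.exp_add, Real.exp_nat_mul, Real.exp_nat_mul]

theorem le_injectivity_general (N D : ℕ) (hD : 1 ≤ D)
    (w : Fin (N * (N - 1) * (D - 1) / 2 + 1) → Fin D → ℝ)
    (hw : ∀ s : Finset (Fin (N * (N - 1) * (D - 1) / 2 + 1)), s.card = D →
      LinearIndependent ℝ (fun j : s => w j))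
    (X X' : Fin N → Fin D → ℝ)
    (h : ∀ (i : Fin D) (j : Fin (N * (N - 1) * (D - 1) / 2 + 1)),
      ∀ p ∈ Finset.Icc 1 N, ∀ q ∈ Finset.Icc 1 (p + 1),
        ∑ n, Real.exp (∑ d,
            (((q : ℝ) - 1) * (Pi.single i (1 : ℝ) : Fin D → ℝ) d
              + ((p : ℝ) - q + 1) * w j d) * X n d)
          = ∑ n, Real.exp (∑ d,
            (((q : ℝ) - 1) * (Pi.single i (1 : ℝ) : Fin D → ℝ) d
              + ((p : ℝ) - q + 1) * w j d) * X' n d)) :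
    ∃ σ : Equiv.Perm (Fin N), ∀ n, X' (σ n) = X n := by
  have hpairs (i : Fin D) (j : Fin (N * (N - 1) * (D - 1) / 2 + 1)) :
      univ.val.map (fun n => (X n i, w j ⬝ᵥ X n)) =
        univ.val.map (fun n => (X' n i, w j ⬝ᵥ X' n)) := by
    have hexp := map_univ_val_prod_eq_of_sum_pow_mul_pow_eq
      (z := fun n => Real.exp (X n i)) (y := fun n => Real.exp (w j ⬝ᵥ X n))
      (z' := fun n => Real.exp (X' n i)) (y' := fun n => Real.exp (w j ⬝ᵥ X' n))
      fun r s hrs hrsN => by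
        simpa only [exp_sum_single_add_mul] using h i j (r + s)
          (mem_Icc.2 ⟨hrs, by simpa using hrsN⟩) (r + 1) (mem_Icc.2 ⟨by omega, by omega⟩)
    refine Multiset.map_injective (Real.exp_injective.prodMap Real.exp_injective) ?_
    rw [Multiset.map_map, Multiset.map_map]
    exact hexp
  have hcard : (#(univ.image X)).choose 2 * (Fintype.card (Fin D) - 1) <
      Fintype.card (Fin (N * (N - 1) * (D - 1) / 2 + 1)) := by
    rw [Fintype.card_fin, Fintype.card_fin, Nat.lt_succ_iff]
    refine le_trans (Nat.mul_le_mul_right _ (Nat.choose_le_choose 2 ?_)) (N.choose_two_mul_le _)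
    simpa using card_image_le (s := univ) (f := X)
  obtain ⟨j, hj⟩ := exists_injOn_dotProduct (fun s hs => hw s (by simpa using hs)) _ hcard
  have : Nonempty (Fin D) := ⟨⟨0, hD⟩⟩
  exact exists_equiv_of_injOn_of_map_univ_val_eq (by simpa using hj) (hpairs · j)

/-- Injectivity of the LE sum-pooling: with weights
`v_{i,j,p,q} = (q−1)·e_i + (p−q+1)·w_j` (where every `D` of the `w_j` are
linearly independent), equality of all the exponential sums
`∑_n exp⟨v_{i,j,p,q}, x^{(n)}⟩` for `X` and `X'` implies `X ~ X'`. -/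
theorem le_injectivity (N D : ℕ) (hN : 2 ≤ N) (hD : 1 ≤ D)
    (w : Fin (N * (N - 1) * (D - 1) / 2 + 1) → Fin D → ℝ)
    (hw : ∀ s : Finset (Fin (N * (N - 1) * (D - 1) / 2 + 1)), s.card = D →
      LinearIndependent ℝ (fun j : s => w j))
    (X X' : Fin N → Fin D → ℝ)
    (h : ∀ (i : Fin D) (j : Fin (N * (N - 1) * (D - 1) / 2 + 1)),
      ∀ p ∈ Finset.Icc 1 N, ∀ q ∈ Finset.Icc 1 (p + 1),
        ∑ n, Real.exp (∑ d,
            (((q : ℝ) - 1) * (Pi.single i (1 : ℝ) : Fin D → ℝ) d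
              + ((p : ℝ) - q + 1) * w j d) * X n d)
          = ∑ n, Real.exp (∑ d,
            (((q : ℝ) - 1) * (Pi.single i (1 : ℝ) : Fin D → ℝ) d
              + ((p : ℝ) - q + 1) * w j d) * X' n d)) :
    ∃ σ : Equiv.Perm (Fin N), ∀ n, X' (σ n) = X n :=
  le_injectivity_general N D hD w hw X X' h
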